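/- arXiv:2210.11675 — 2 statements merged into one kernel-verified Lean document; each statement's English description precedes it below -/
import Mathlib

section
/- Let a1 < a2 < a3 be real numbers, let mu : ℝ → ℝ be the triangular membership function of (a1, a2, a3), let λ be real with 0 < λ ≤ 1, let h > 0 and s be real. Then sup{ mu(t) : t ∈ ℝ, t·h − s ≥ 1 } ≥ λ if and only if ((1 − λ)·a3 + λ·a2)·h − s ≥ 1. -/
/-- The triangular membership function of the triangular fuzzy number `(a1, a2, a3)`. -/
noncomputable def triMu (a1 a2 a3 : ℝ) (t : ℝ) : ℝ :=
  if a1 ≤ t ∧ t ≤ a2 then (t - a1) / (a2 - a1)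
  else if a2 ≤ t ∧ t ≤ a3 then (t - a3) / (a2 - a3)
  else 0

lemma triMu_le_one {a1 a2 a3 : ℝ} (h12 : a1 < a2) (h23 : a2 < a3) (t : ℝ) :
    triMu a1 a2 a3 t ≤ 1 := by
  unfold triMu
  split_ifs with h1 h2
  · rw [div_le_one (by linarith)]; linarith [h1.2]
  · rw [div_le_iff_of_neg (by linarith : a2 - a3 < 0)]; linarith [h2.1]
  · linarith

lemma triMu_anti {a1 a2 a3 : ℝ} (h12 : a1 < a2) (h23 : a2 < a3) {x y : ℝ}
    (hx : a2 < x) (hxy : x ≤ y) : triMu a1 a2 a3 y ≤ triMu a1 a2 a3 x := by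
  have hy : a2 < y := lt_of_lt_of_le hx hxy
  unfold triMu
  rw [if_neg (by rintro ⟨-, h⟩; linarith : ¬(a1 ≤ y ∧ y ≤ a2)),
      if_neg (by rintro ⟨-, h⟩; linarith : ¬(a1 ≤ x ∧ x ≤ a2))]
  split_ifs with hy2 hx2 hx2
  · rw [div_le_div_right_of_neg (by linarith : a2 - a3 < 0)]; linarith
  · exact absurd ⟨le_of_lt hx, le_trans hxy hy2.2⟩ hx2
  · exact div_nonneg_of_nonpos (by linarith [hx2.2]) (by linarith)
  · exact le_refl _

lemma triMu_lam {a1 a2 a3 lam : ℝ} (h12 : a1 < a2) (h23 : a2 < a3)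
    (hlam0 : 0 < lam) (hlam1 : lam ≤ 1) :
    triMu a1 a2 a3 ((1 - lam) * a3 + lam * a2) = lam := by
  set tl := (1 - lam) * a3 + lam * a2 with htl
  rcases eq_or_lt_of_le hlam1 with h1 | h1
  · have : tl = a2 := by rw [htl, h1]; ring
    rw [this]
    unfold triMu
    rw [if_pos ⟨le_of_lt h12, le_refl _⟩, div_self (by linarith), h1]
  · have hgt : a2 < tl := by rw [htl]; nlinarith
    have hle : tl ≤ a3 := by rw [htl]; nlinarith
    unfold triMu
    rw [if_neg (by rintro ⟨-, hc⟩; linarith), if_pos ⟨le_of_lt hgt, hle⟩]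
    have : tl - a3 = lam * (a2 - a3) := by rw [htl]; ring
    rw [this, mul_div_assoc, div_self (by linarith), mul_one]

theorem chance_constraint_pos_h (a1 a2 a3 : ℝ) (h12 : a1 < a2) (h23 : a2 < a3)
    (lam : ℝ) (hlam0 : 0 < lam) (hlam1 : lam ≤ 1) (h s : ℝ) (hh : 0 < h) :
    sSup (triMu a1 a2 a3 '' {t : ℝ | t * h - s ≥ 1}) ≥ lam ↔
      ((1 - lam) * a3 + lam * a2) * h - s ≥ 1 := by
  set tl := (1 - lam) * a3 + lam * a2 with htl
  have htl2 : a2 ≤ tl := by rw [htl]; nlinarith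
  constructor
  · intro hsup
    by_contra hc
    push_neg at hc
    set t0 := (1 + s) / h with ht0
    have ht0mem : t0 * h - s ≥ 1 := by
      rw [ht0, div_mul_cancel₀ _ (ne_of_gt hh)]; linarith
    have htl0 : tl < t0 := by
      rw [ht0, lt_div_iff₀ hh]; linarith
    have hbound : ∀ u ∈ triMu a1 a2 a3 '' {t : ℝ | t * h - s ≥ 1},
        u ≤ triMu a1 a2 a3 t0 := by
      rintro u ⟨t, ht, rfl⟩
      have : t0 ≤ t := by
        rw [ht0, div_le_iff₀ hh]; simp only [Set.mem_setOf_eq] at ht; linarith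
      exact triMu_anti h12 h23 (lt_of_le_of_lt htl2 htl0) this
    have hsle : sSup (triMu a1 a2 a3 '' {t : ℝ | t * h - s ≥ 1}) ≤ triMu a1 a2 a3 t0 :=
      csSup_le ⟨_, ⟨t0, ht0mem, rfl⟩⟩ hbound
    have hlt : triMu a1 a2 a3 t0 < lam := by
      have h2 : a2 < t0 := lt_of_le_of_lt htl2 htl0
      unfold triMu
      rw [if_neg (by rintro ⟨-, hcc⟩; linarith)]
      split_ifs with h3
      · have hlameq : lam = (tl - a3) / (a2 - a3) := by
          rw [htl, eq_div_iff (by linarith : a2 - a3 ≠ 0)]; ring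
        rw [hlameq, div_lt_div_right_of_neg (by linarith : a2 - a3 < 0)]
        linarith
      · exact hlam0
    linarith
  · intro hc
    have hmem : tl ∈ {t : ℝ | t * h - s ≥ 1} := hc
    have hbdd : BddAbove (triMu a1 a2 a3 '' {t : ℝ | t * h - s ≥ 1}) := by
      refine ⟨1, ?_⟩
      rintro u ⟨t, -, rfl⟩
      exact triMu_le_one h12 h23 t
    calc lam = triMu a1 a2 a3 tl := (triMu_lam h12 h23 hlam0 hlam1).symm
      _ ≤ _ := le_csSup hbdd ⟨tl, hmem, rfl⟩
end

section
/- Let a1 < a2 < a3 be real numbers, let mu : ℝ → ℝ be the triangular membership function of (a1, a2, a3), let λ be real with 0 < λ ≤ 1, let h < 0 and s be real. Then sup{ mu(t) : t ∈ ℝ, t·h − s ≥ 1 } ≥ λ if and only if ((1 − λ)·a1 + λ·a2)·h − s ≥ 1. -/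
theorem chance_constraint_neg_h (a1 a2 a3 : ℝ) (h12 : a1 < a2) (h23 : a2 < a3)
    (lam : ℝ) (hlam0 : 0 < lam) (hlam1 : lam ≤ 1) (h s : ℝ) (hh : h < 0) :
    sSup (triMu a1 a2 a3 '' {t : ℝ | t * h - s ≥ 1}) ≥ lam ↔
      ((1 - lam) * a1 + lam * a2) * h - s ≥ 1 := by
  have ha12 : (0:ℝ) < a2 - a1 := by linarith
  have hhne : h ≠ 0 := ne_of_lt hh
  set t0 := (1 - lam) * a1 + lam * a2 with ht0
  have ht0a1 : a1 ≤ t0 := by nlinarith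
  have ht0a2 : t0 ≤ a2 := by nlinarith
  have hmu_t0 : triMu a1 a2 a3 t0 = lam := by
    unfold triMu
    rw [if_pos ⟨ht0a1, ht0a2⟩]
    field_simp
    ring
  have hbdd : BddAbove (triMu a1 a2 a3 '' {t : ℝ | t * h - s ≥ 1}) := by
    refine ⟨1, ?_⟩
    rintro x ⟨t, _, rfl⟩
    unfold triMu
    split_ifs with h1 h2
    · rw [div_le_one ha12]; linarith [h1.2]
    · have hneg : a2 - a3 < 0 := by linarith
      rw [div_le_iff_of_neg hneg]; linarith [h2.1]
    · linarith
  set c := (1 + s) / h with hc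
  have hch : c * h = 1 + s := div_mul_cancel₀ _ hhne
  have hcS : c * h - s ≥ 1 := by rw [hch]; linarith
  constructor
  · intro hsup
    by_contra hcon
    push_neg at hcon
    have hct0 : c < t0 := by
      by_contra hle
      push_neg at hle
      have := mul_le_mul_of_nonpos_right hle hh.le
      linarith
    have key : sSup (triMu a1 a2 a3 '' {t : ℝ | t * h - s ≥ 1}) ≤
        max 0 ((c - a1) / (a2 - a1)) := by
      have hcmem : c ∈ {t : ℝ | t * h - s ≥ 1} := hcS
      apply csSup_le ⟨triMu a1 a2 a3 c, Set.mem_image_of_mem _ hcmem⟩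
      rintro x ⟨t, htS, rfl⟩
      have htc : t ≤ c := by
        by_contra hle
        push_neg at hle
        have := mul_lt_mul_of_neg_right hle hh
        simp only [Set.mem_setOf_eq] at htS
        linarith
      unfold triMu
      split_ifs with h1 h2
      · refine le_max_of_le_right ?_
        gcongr
      · exfalso; linarith [h2.1]
      · exact le_max_left _ _
    have hlt : (c - a1) / (a2 - a1) < lam := by
      rw [div_lt_iff₀ ha12]; nlinarith
    have := max_lt hlam0 hlt
    linarith
  · intro hcon
    have hle := le_csSup hbdd ⟨t0, hcon, hmu_t0⟩
    exact hle
end
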